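/- arXiv:2110.02212 — 6 statements merged into one kernel-verified Lean document; each statement's English description precedes it below -/
import Mathlib

section
/- For all real numbers ε₁ ∈ [0,1) and ε₂ ∈ [0,1] with ε₁ + √ε₂ < 1, the inequality (1 - ε₁ - √ε₂)⁻¹ ≤ (√(1-ε₂) - √ε₁)⁻² holds if and only if (1/2)(1 - √(1-ε₂))(1 - √ε₂) ≤ ε₁ ≤ (1/2)(1 + √(1-ε₂))(1 - √ε₂). -/
/-!
Write `a = √ε₁`, `s = √ε₂`, `c = √(1 - ε₂)`, so that `c² + s² = 1`. The denominator
`1 - ε₁ - s` is positive and `(c - a)²` cannot vanish, so the inequality of inverses is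
`(c - a)² ≤ 1 - a² - s`, i.e. `2a² + s - s² ≤ 2ac`. Both sides are nonnegative, so we may
square, and the difference of the squares factors as `(2ε₁ - (1 - s)(1 - c))(2ε₁ - (1 - s)(1 + c))`:
a quadratic in `ε₁` which is nonpositive exactly between its two roots.
-/

section ErrorRegion

variable {a s c : ℝ}

lemma sq_sub_pos_of_add_lt_one (hs : 0 ≤ s) (hs₁ : s ≤ 1) (hcs : c ^ 2 + s ^ 2 = 1)
    (h : a ^ 2 + s < 1) : 0 < (c - a) ^ 2 := by
  refine sq_pos_of_ne_zero (sub_ne_zero.mpr ?_)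
  rintro rfl
  nlinarith

lemma sq_sub_le_iff_mem_region (ha : 0 ≤ a) (hs : 0 ≤ s) (hs₁ : s ≤ 1) (hc : 0 ≤ c)
    (hcs : c ^ 2 + s ^ 2 = 1) :
    (c - a) ^ 2 ≤ 1 - a ^ 2 - s ↔
      (1 - s) * (1 - c) ≤ 2 * a ^ 2 ∧ 2 * a ^ 2 ≤ (1 - s) * (1 + c) := by
  have hlin : (c - a) ^ 2 - (1 - a ^ 2 - s) = (2 * a ^ 2 + s - s ^ 2) - 2 * a * c := by
    linear_combination hcs
  have hfactor : (2 * a ^ 2 + s - s ^ 2) ^ 2 - (2 * a * c) ^ 2 =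
      (2 * a ^ 2 - (1 - s) * (1 - c)) * (2 * a ^ 2 - (1 - s) * (1 + c)) := by
    linear_combination (-4 * a ^ 2 + s ^ 2 - 2 * s + 1) * hcs
  have hlhs : 0 ≤ 2 * a ^ 2 + s - s ^ 2 := by nlinarith
  have hroots : (1 - s) * (1 - c) ≤ (1 - s) * (1 + c) := by
    gcongr
    linarith
  calc (c - a) ^ 2 ≤ 1 - a ^ 2 - s
      ↔ 2 * a ^ 2 + s - s ^ 2 ≤ 2 * a * c := by rw [← sub_nonpos, hlin, sub_nonpos]
    _ ↔ (2 * a ^ 2 + s - s ^ 2) ^ 2 ≤ (2 * a * c) ^ 2 := (sq_le_sq₀ hlhs (by positivity)).symm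
    _ ↔ _ := by rw [← sub_nonpos, hfactor, sub_mul_sub_nonpos_iff _ hroots]

end ErrorRegion

/-- For ε₁ ∈ [0,1), ε₂ ∈ [0,1] with ε₁ + √ε₂ < 1, the inequality
`(1 - ε₁ - √ε₂)⁻¹ ≤ (√(1-ε₂) - √ε₁)⁻²` holds iff
`(1/2)(1 - √(1-ε₂))(1 - √ε₂) ≤ ε₁ ≤ (1/2)(1 + √(1-ε₂))(1 - √ε₂)`. -/
theorem yield_cost_error_region (ε₁ ε₂ : ℝ)
    (h₁ : ε₁ ∈ Set.Ico (0 : ℝ) 1) (h₂ : ε₂ ∈ Set.Icc (0 : ℝ) 1)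
    (h : ε₁ + Real.sqrt ε₂ < 1) :
    (1 - ε₁ - Real.sqrt ε₂)⁻¹ ≤ ((Real.sqrt (1 - ε₂) - Real.sqrt ε₁) ^ 2)⁻¹ ↔
      (1 / 2) * (1 - Real.sqrt (1 - ε₂)) * (1 - Real.sqrt ε₂) ≤ ε₁ ∧
        ε₁ ≤ (1 / 2) * (1 + Real.sqrt (1 - ε₂)) * (1 - Real.sqrt ε₂) := by
  obtain ⟨hε₁, -⟩ := h₁
  obtain ⟨hε₂, hε₂₁⟩ := h₂
  have hs₁ : √ε₂ ≤ 1 := Real.sqrt_le_one.mpr hε₂₁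
  have hcs : √(1 - ε₂) ^ 2 + √ε₂ ^ 2 = 1 := by
    rw [Real.sq_sqrt (by linarith), Real.sq_sqrt hε₂]
    ring
  have ha : √ε₁ ^ 2 = ε₁ := Real.sq_sqrt hε₁
  have hden : 0 < 1 - ε₁ - √ε₂ := by linarith
  have hsq := sq_sub_pos_of_add_lt_one (Real.sqrt_nonneg _) hs₁ hcs (ha ▸ h)
  have hregion := sq_sub_le_iff_mem_region (Real.sqrt_nonneg ε₁) (Real.sqrt_nonneg _) hs₁
    (Real.sqrt_nonneg _) hcs
  rw [ha] at hregion
  rw [inv_le_inv₀ hden hsq, hregion]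
  constructor <;> rintro ⟨hlo, hhi⟩ <;> constructor <;> linarith
end

section
/- For all ε₁, ε₂ ∈ [0,1] with ε₁ + √ε₂ < 1, letting ε' := (√(ε₂(1-ε₁)) + √(ε₁(1-ε₂)))², one has 1 - ε' ≥ 1 - ε₁ - √ε₂; equivalently ε₁ + √ε₂ ≥ (√(ε₁(1-ε₂)) + √(ε₂(1-ε₁)))². -/
/-!
Write `ε₁ = sin² α` and `ε₂ = sin² β`. Then `√(ε₁(1-ε₂)) + √(ε₂(1-ε₁)) = sin (α + β)`, and
`ε₁ + sin β - sin² (α + β) = sin β · (1 - sin (2α + β)) ≥ 0`.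
No trigonometry is needed: `(a, b) = (sin α, cos α)` and `(s, t) = (sin β, cos β)` are just
points of the unit circle, and `sin (2α + β) ≤ 1` is Cauchy–Schwarz.
-/

lemma mul_add_mul_le_one_of_sq_add_sq_eq_one {x y u v : ℝ} (hxy : x ^ 2 + y ^ 2 = 1)
    (huv : u ^ 2 + v ^ 2 = 1) : x * u + y * v ≤ 1 := by
  nlinarith [sq_nonneg (x - u), sq_nonneg (y - v)]

lemma sq_mul_add_mul_le_sq_add {a b s t : ℝ} (hab : a ^ 2 + b ^ 2 = 1) (hst : s ^ 2 + t ^ 2 = 1)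
    (hs : 0 ≤ s) : (a * t + s * b) ^ 2 ≤ a ^ 2 + s := by
  have hdouble : (1 - 2 * a ^ 2) ^ 2 + (2 * a * b) ^ 2 = 1 := by
    linear_combination 4 * a ^ 2 * hab
  have hsin : (1 - 2 * a ^ 2) * s + 2 * a * b * t ≤ 1 :=
    mul_add_mul_le_one_of_sq_add_sq_eq_one hdouble hst
  have hgap : a ^ 2 + s - (a * t + s * b) ^ 2 = s * (1 - ((1 - 2 * a ^ 2) * s + 2 * a * b * t)) := by
    linear_combination (-a ^ 2) * hst - s ^ 2 * hab
  linarith [mul_nonneg hs (sub_nonneg.2 hsin)]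

lemma sq_sqrt_mul_one_sub_add_le {ε₁ ε₂ : ℝ} (h₁ : ε₁ ∈ Set.Icc (0 : ℝ) 1)
    (h₂ : ε₂ ∈ Set.Icc (0 : ℝ) 1) :
    (Real.sqrt (ε₁ * (1 - ε₂)) + Real.sqrt (ε₂ * (1 - ε₁))) ^ 2 ≤ ε₁ + Real.sqrt ε₂ := by
  obtain ⟨h₁0, h₁1⟩ := h₁
  obtain ⟨h₂0, h₂1⟩ := h₂
  rw [Real.sqrt_mul h₁0, Real.sqrt_mul h₂0]
  have hcircle {ε : ℝ} (h0 : 0 ≤ ε) (h1 : ε ≤ 1) : √ε ^ 2 + √(1 - ε) ^ 2 = 1 := by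
    rw [Real.sq_sqrt h0, Real.sq_sqrt (sub_nonneg.2 h1)]; ring
  simpa only [Real.sq_sqrt h₁0] using
    sq_mul_add_mul_le_sq_add (hcircle h₁0 h₁1) (hcircle h₂0 h₂1) (Real.sqrt_nonneg ε₂)

theorem improved_bound_tighter_general (ε₁ ε₂ : ℝ)
    (h₁ : ε₁ ∈ Set.Icc (0 : ℝ) 1) (h₂ : ε₂ ∈ Set.Icc (0 : ℝ) 1) :
    let ε' : ℝ := (Real.sqrt (ε₂ * (1 - ε₁)) + Real.sqrt (ε₁ * (1 - ε₂))) ^ 2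
    1 - ε₁ - Real.sqrt ε₂ ≤ 1 - ε' ∧
      (Real.sqrt (ε₁ * (1 - ε₂)) + Real.sqrt (ε₂ * (1 - ε₁))) ^ 2 ≤ ε₁ + Real.sqrt ε₂ := by
  intro ε'
  have hbound := sq_sqrt_mul_one_sub_add_le h₁ h₂
  refine ⟨?_, hbound⟩
  rw [add_comm] at hbound
  linarith

/-- For ε₁, ε₂ ∈ [0,1] with ε₁ + √ε₂ < 1 and
ε' := (√(ε₂(1-ε₁)) + √(ε₁(1-ε₂)))², one has 1 - ε' ≥ 1 - ε₁ - √ε₂;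
equivalently ε₁ + √ε₂ ≥ ε'. -/
theorem improved_bound_tighter (ε₁ ε₂ : ℝ)
    (h₁ : ε₁ ∈ Set.Icc (0 : ℝ) 1) (h₂ : ε₂ ∈ Set.Icc (0 : ℝ) 1)
    (h : ε₁ + Real.sqrt ε₂ < 1) :
    let ε' : ℝ := (Real.sqrt (ε₂ * (1 - ε₁)) + Real.sqrt (ε₁ * (1 - ε₂))) ^ 2
    1 - ε₁ - Real.sqrt ε₂ ≤ 1 - ε' ∧
      (Real.sqrt (ε₁ * (1 - ε₂)) + Real.sqrt (ε₂ * (1 - ε₁))) ^ 2 ≤ ε₁ + Real.sqrt ε₂ :=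
  improved_bound_tighter_general ε₁ ε₂ h₁ h₂
end

section
/- Fix ε₂ ∈ [0,1] and define g(ε₁) := ε₁ + √ε₂ - (√(ε₁(1-ε₂)) + √(ε₂(1-ε₁)))² for ε₁ ∈ [0, 1-ε₂]. Then g(0) = g(1-ε₂) = √ε₂ - ε₂ ≥ 0, the minimum of g over [0, 1-ε₂] is attained at ε₁* = (1-√ε₂)/2, and g(ε₁*) = 0. -/
/-!
With `s = √ε₂`, write `√(ε₁(1 - ε₂)) = √ε₁ · √(1 + s) · √(1 - s)` and `√(ε₂(1 - ε₁)) = s · √(1 - ε₁)`;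
expanding the square and using `ε₁ + (1 - ε₁) = 1` turns `g` into a perfect square,
`g(ε₁) = s · (√(ε₁(1 + s)) - √((1 - ε₁)(1 - s)))²`.
Hence `g ≥ 0` on `[0, 1]`, with equality exactly when `ε₁(1 + s) = (1 - ε₁)(1 - s)`, i.e. at
`ε₁ = (1 - s)/2`; the endpoint values are direct computations.
-/

open Real

noncomputable def gap (ε₂ ε₁ : ℝ) : ℝ :=
  ε₁ + √ε₂ - (√(ε₁ * (1 - ε₂)) + √(ε₂ * (1 - ε₁))) ^ 2

theorem gap_eq_sqrt_mul_sq {ε₂ ε₁ : ℝ} (hε₂ : 0 ≤ ε₂) (hε₂' : ε₂ ≤ 1) (hε₁ : 0 ≤ ε₁)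
    (hε₁' : ε₁ ≤ 1) :
    gap ε₂ ε₁ = √ε₂ * (√(ε₁ * (1 + √ε₂)) - √((1 - ε₁) * (1 - √ε₂))) ^ 2 := by
  obtain ⟨s, hs, rfl⟩ : ∃ s, 0 ≤ s ∧ ε₂ = s ^ 2 := ⟨√ε₂, sqrt_nonneg _, (sq_sqrt hε₂).symm⟩
  have hs' : s ≤ 1 := by nlinarith
  have hu := sq_sqrt hε₁
  have hv := sq_sqrt (sub_nonneg.2 hε₁')
  have hp := sq_sqrt (by linarith : 0 ≤ 1 + s)
  have hq := sq_sqrt (sub_nonneg.2 hs')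
  have h_left : √(ε₁ * (1 - s ^ 2)) = √ε₁ * (√(1 + s) * √(1 - s)) := by
    rw [show 1 - s ^ 2 = (1 + s) * (1 - s) by ring, sqrt_mul hε₁, sqrt_mul (by linarith)]
  rw [gap, sqrt_sq hs, h_left, sqrt_mul' _ (sub_nonneg.2 hε₁'), sqrt_sq hs,
    sqrt_mul hε₁, sqrt_mul (sub_nonneg.2 hε₁')]
  linear_combination (-(√(1 + s) ^ 2 * √(1 - s) ^ 2) - s * √(1 + s) ^ 2) * hu
    + (-ε₁ * √(1 - s) ^ 2 - s * ε₁) * hp + (-ε₁ * (1 + s) - s * (1 - ε₁)) * hq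
    + (-s ^ 2 - s * √(1 - s) ^ 2) * hv

theorem gap_nonneg {ε₂ ε₁ : ℝ} (hε₂ : 0 ≤ ε₂) (hε₂' : ε₂ ≤ 1) (hε₁ : 0 ≤ ε₁) (hε₁' : ε₁ ≤ 1) :
    0 ≤ gap ε₂ ε₁ := by
  rw [gap_eq_sqrt_mul_sq hε₂ hε₂' hε₁ hε₁']
  positivity

theorem gap_one_sub_sqrt_div_two {ε₂ : ℝ} (hε₂ : 0 ≤ ε₂) (hε₂' : ε₂ ≤ 1) :
    gap ε₂ ((1 - √ε₂) / 2) = 0 := by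
  have hs : √ε₂ ≤ 1 := sqrt_le_one.2 hε₂'
  rw [gap_eq_sqrt_mul_sq hε₂ hε₂' (by linarith [sqrt_nonneg ε₂]) (by linarith [sqrt_nonneg ε₂])]
  have h_balance : (1 - √ε₂) / 2 * (1 + √ε₂) = (1 - (1 - √ε₂) / 2) * (1 - √ε₂) := by ring
  rw [h_balance, sub_self, zero_pow two_ne_zero, mul_zero]

theorem gap_zero {ε₂ : ℝ} (hε₂ : 0 ≤ ε₂) : gap ε₂ 0 = √ε₂ - ε₂ := by
  simp [gap, sq_sqrt hε₂]

theorem gap_one_sub_self {ε₂ : ℝ} (hε₂ : 0 ≤ ε₂) (hε₂' : ε₂ ≤ 1) :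
    gap ε₂ (1 - ε₂) = √ε₂ - ε₂ := by
  rw [gap, sub_sub_cancel, sqrt_mul_self (sub_nonneg.2 hε₂'), sqrt_mul_self hε₂]
  ring

theorem one_sub_sqrt_div_two_mem_Icc {ε₂ : ℝ} (hε₂ : 0 ≤ ε₂) (hε₂' : ε₂ ≤ 1) :
    (1 - √ε₂) / 2 ∈ Set.Icc 0 (1 - ε₂) := by
  have hs0 := sqrt_nonneg ε₂
  have hs1 : √ε₂ ≤ 1 := sqrt_le_one.2 hε₂'
  have hs2 := sq_sqrt hε₂
  constructor <;> nlinarith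

/-- For fixed ε₂ ∈ [0,1], define
g(ε₁) := ε₁ + √ε₂ - (√(ε₁(1-ε₂)) + √(ε₂(1-ε₁)))² on [0, 1-ε₂].  Then
g(0) = g(1-ε₂) = √ε₂ - ε₂ ≥ 0, the minimum of g over [0, 1-ε₂] is attained at
ε₁* = (1-√ε₂)/2 ∈ [0, 1-ε₂], and g(ε₁*) = 0. -/
theorem gap_function_minimum (ε₂ : ℝ) (h₂ : ε₂ ∈ Set.Icc (0 : ℝ) 1) :
    let g : ℝ → ℝ := fun ε₁ =>
      ε₁ + Real.sqrt ε₂ - (Real.sqrt (ε₁ * (1 - ε₂)) + Real.sqrt (ε₂ * (1 - ε₁))) ^ 2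
    let ε₁star : ℝ := (1 - Real.sqrt ε₂) / 2
    g 0 = Real.sqrt ε₂ - ε₂ ∧
      g (1 - ε₂) = Real.sqrt ε₂ - ε₂ ∧
      0 ≤ Real.sqrt ε₂ - ε₂ ∧
      ε₁star ∈ Set.Icc (0 : ℝ) (1 - ε₂) ∧
      (∀ ε₁ ∈ Set.Icc (0 : ℝ) (1 - ε₂), g ε₁star ≤ g ε₁) ∧
      g ε₁star = 0 := by
  obtain ⟨h0, h1⟩ := h₂
  intro g ε₁star
  have h_min : g ε₁star = 0 := gap_one_sub_sqrt_div_two h0 h1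
  refine ⟨gap_zero h0, gap_one_sub_self h0 h1, ?_, one_sub_sqrt_div_two_mem_Icc h0 h1,
    fun ε₁ hε₁ => ?_, h_min⟩
  · rw [← gap_zero h0]
    exact gap_nonneg h0 h1 le_rfl zero_le_one
  · rw [h_min]
    exact gap_nonneg h0 h1 hε₁.1 (by linarith [hε₁.2])
end

section
/- Let ρ, σ, τ be density matrices (positive semidefinite operators with trace 1) on a finite-dimensional Hilbert space, let F denote the fidelity F(ρ,σ) := (‖√ρ √σ‖₁)², and define the purified distance P(ρ,σ) := √(1 - F(ρ,σ)). If P(ρ,σ)² + P(σ,τ)² ≤ 1, then P(ρ,τ) ≤ P(ρ,σ)·√F(σ,τ) + P(σ,τ)·√F(ρ,σ). -/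
/-!
Write `a = ‖√ρ √σ‖₁`, `b = ‖√σ √τ‖₁`, `c = ‖√ρ √τ‖₁`. The polar decomposition `M = V √(MᴴM)`
shows that `‖M‖₁` is the maximum of `|tr (M U)|` over unitaries `U`. Taking unitaries `U₁`, `U₂`
that attain `a` and `b`, the matrices `u = √ρ U₁ᴴ`, `v = √σ`, `w = √τ U₂` are unit vectors for the
Hilbert–Schmidt inner product `⟪A, B⟫ = tr (Aᴴ B)` (purifications of `ρ`, `σ`, `τ`) with
`|⟪u, v⟫| = a`, `|⟪v, w⟫| = b` and `|⟪u, w⟫| ≤ c`. Splitting `u` and `w` along `v` gives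
`ab - √(1 - a²) √(1 - b²) ≤ c`: the angles `arccos a`, `arccos b`, `arccos c` obey the triangle
inequality, and the claim is its sine.
-/
open Matrix ComplexOrder

variable {n : Type*} [Fintype n] [DecidableEq n]

/-- The positive semidefinite square root of a positive semidefinite matrix
(the Mathlib definition of December 2024, removed since). -/
noncomputable def Matrix.PosSemidef.sqrt {𝕜 : Type*} [RCLike 𝕜] {A : Matrix n n 𝕜}
    (hA : A.PosSemidef) : Matrix n n 𝕜 :=
  hA.1.eigenvectorUnitary.1 * diagonal ((↑) ∘ (√·) ∘ hA.1.eigenvalues) *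
  (star hA.1.eigenvectorUnitary : Matrix n n 𝕜)

/-- The trace norm ‖A‖₁ = Tr √(AᴴA) of a complex matrix. -/
noncomputable def traceNorm (A : Matrix n n ℂ) : ℝ :=
  ((Matrix.posSemidef_conjTranspose_mul_self A).sqrt.trace).re

/-- The Uhlmann fidelity F(ρ,σ) := (‖√ρ √σ‖₁)² of two positive semidefinite matrices. -/
noncomputable def fid (ρ σ : Matrix n n ℂ) (hρ : ρ.PosSemidef) (hσ : σ.PosSemidef) : ℝ :=
  (traceNorm (hρ.sqrt * hσ.sqrt)) ^ 2

open scoped InnerProductSpace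

section UnitVectors

variable {𝕜 E : Type*} [RCLike 𝕜] [NormedAddCommGroup E] [InnerProductSpace 𝕜 E]

lemma norm_sub_inner_smul_sq {v : E} (hv : ‖v‖ = 1) (u : E) :
    ‖u - ⟪v, u⟫_𝕜 • v‖ ^ 2 = ‖u‖ ^ 2 - ‖⟪v, u⟫_𝕜‖ ^ 2 := by
  rw [norm_sub_sq (𝕜 := 𝕜), inner_smul_right, ← inner_conj_symm, RCLike.conj_mul, norm_smul, hv,
    RCLike.norm_conj, ← RCLike.ofReal_pow, RCLike.ofReal_re]
  ring

lemma norm_inner_mul_norm_inner_sub_le {u v w : E} (hu : ‖u‖ = 1) (hv : ‖v‖ = 1) (hw : ‖w‖ = 1) :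
    ‖⟪u, v⟫_𝕜‖ * ‖⟪v, w⟫_𝕜‖ - √(1 - ‖⟪u, v⟫_𝕜‖ ^ 2) * √(1 - ‖⟪v, w⟫_𝕜‖ ^ 2) ≤ ‖⟪u, w⟫_𝕜‖ := by
  set u' := u - ⟪v, u⟫_𝕜 • v
  set w' := w - ⟪v, w⟫_𝕜 • v
  have hvv : ⟪v, v⟫_𝕜 = 1 := by rw [inner_self_eq_norm_sq_to_K, hv]; norm_num
  have hdecomp : ⟪u, w⟫_𝕜 = ⟪u, v⟫_𝕜 * ⟪v, w⟫_𝕜 + ⟪u', w'⟫_𝕜 := by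
    simp only [u', w', inner_sub_left, inner_sub_right, inner_smul_left, inner_smul_right, hvv,
      inner_conj_symm]
    ring
  have hu' : ‖u'‖ = √(1 - ‖⟪u, v⟫_𝕜‖ ^ 2) := by
    rw [norm_inner_symm, ← one_pow 2, ← hu, ← norm_sub_inner_smul_sq hv,
      Real.sqrt_sq (norm_nonneg _)]
  have hw' : ‖w'‖ = √(1 - ‖⟪v, w⟫_𝕜‖ ^ 2) := by
    rw [← one_pow 2, ← hw, ← norm_sub_inner_smul_sq hv, Real.sqrt_sq (norm_nonneg _)]
  calc ‖⟪u, v⟫_𝕜‖ * ‖⟪v, w⟫_𝕜‖ - √(1 - ‖⟪u, v⟫_𝕜‖ ^ 2) * √(1 - ‖⟪v, w⟫_𝕜‖ ^ 2)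
      ≤ ‖⟪u, v⟫_𝕜 * ⟪v, w⟫_𝕜‖ - ‖⟪u', w'⟫_𝕜‖ := by
        rw [norm_mul, ← hu', ← hw']
        gcongr
        exact norm_inner_le_norm _ _
    _ ≤ ‖⟪u, w⟫_𝕜‖ := hdecomp ▸ norm_sub_le_norm_add _ _

end UnitVectors

/-- With `a = cos α`, `b = cos β`, `hab` says `α + β ≤ π / 2` and `hc` says `cos (α + β) ≤ c`,
so `√(1 - c²) ≤ sin (α + β)`. -/
lemma sqrt_one_sub_sq_le_of_mul_sub_le {a b c : ℝ} (ha0 : 0 ≤ a) (ha1 : a ≤ 1) (hb0 : 0 ≤ b)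
    (hb1 : b ≤ 1) (hab : 1 ≤ a ^ 2 + b ^ 2) (hc : a * b - √(1 - a ^ 2) * √(1 - b ^ 2) ≤ c) :
    √(1 - c ^ 2) ≤ √(1 - a ^ 2) * b + √(1 - b ^ 2) * a := by
  set A := √(1 - a ^ 2)
  set B := √(1 - b ^ 2)
  have hA2 : A ^ 2 = 1 - a ^ 2 := Real.sq_sqrt (by nlinarith)
  have hB2 : B ^ 2 = 1 - b ^ 2 := Real.sq_sqrt (by nlinarith)
  have hAb : A ≤ b := Real.sqrt_le_left hb0 |>.mpr (by linarith)
  have hBa : B ≤ a := Real.sqrt_le_left ha0 |>.mpr (by linarith)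
  have hcos_nonneg : 0 ≤ a * b - A * B :=
    sub_nonneg.mpr ((mul_le_mul hAb hBa (Real.sqrt_nonneg _) hb0).trans_eq (mul_comm b a))
  have hsin_sq : (A * b + B * a) ^ 2 = 1 - (a * b - A * B) ^ 2 := by
    linear_combination (b ^ 2 + B ^ 2) * hA2 + hB2
  rw [Real.sqrt_le_left (by positivity)]
  nlinarith [mul_self_le_mul_self hcos_nonneg hc]

namespace Matrix

variable {𝕜 : Type*} [RCLike 𝕜]

section HilbertSchmidt

variable {m : Type*} [Fintype m]

noncomputable def toEuclideanSpace (A : Matrix m m 𝕜) : EuclideanSpace 𝕜 (m × m) :=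
  WithLp.toLp 2 fun p => A p.1 p.2

lemma inner_toEuclideanSpace (A B : Matrix m m 𝕜) :
    ⟪A.toEuclideanSpace, B.toEuclideanSpace⟫_𝕜 = (Aᴴ * B).trace := by
  simp only [PiLp.inner_apply, toEuclideanSpace, RCLike.inner_apply, trace, diag, mul_apply,
    conjTranspose_apply, Fintype.sum_prod_type]
  rw [Finset.sum_comm]
  simp only [mul_comm, RCLike.star_def]

lemma norm_toEuclideanSpace_sq (A : Matrix m m 𝕜) :
    ‖A.toEuclideanSpace‖ ^ 2 = RCLike.re (Aᴴ * A).trace := by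
  rw [← inner_self_eq_norm_sq (𝕜 := 𝕜), inner_toEuclideanSpace]

end HilbertSchmidt

lemma norm_toEuclideanSpace_mul_unitary (A : Matrix n n 𝕜) {U : Matrix n n 𝕜}
    (hU : U ∈ unitaryGroup n 𝕜) :
    ‖(A * U).toEuclideanSpace‖ = ‖A.toEuclideanSpace‖ := by
  have hUU : U * Uᴴ = 1 := mem_unitaryGroup_iff.mp hU
  rw [← sq_eq_sq₀ (norm_nonneg _) (norm_nonneg _), norm_toEuclideanSpace_sq,
    norm_toEuclideanSpace_sq, conjTranspose_mul, Matrix.mul_assoc, trace_mul_comm,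
    Matrix.mul_assoc, Matrix.mul_assoc, hUU, Matrix.mul_one]

namespace PosSemidef

variable {A : Matrix n n 𝕜}

lemma posSemidef_sqrt (hA : A.PosSemidef) : hA.sqrt.PosSemidef := by
  refine (posSemidef_diagonal_iff.mpr fun i => ?_).mul_mul_conjTranspose_same _
  exact RCLike.ofReal_nonneg.mpr (Real.sqrt_nonneg _)

lemma conjTranspose_sqrt (hA : A.PosSemidef) : hA.sqrtᴴ = hA.sqrt :=
  hA.posSemidef_sqrt.1

lemma sqrt_mul_self (hA : A.PosSemidef) : hA.sqrt * hA.sqrt = A := by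
  set U : Matrix n n 𝕜 := hA.1.eigenvectorUnitary.1
  have hUU : star U * U = 1 := mem_unitaryGroup_iff'.mp hA.1.eigenvectorUnitary.2
  have hDD : (diagonal ((↑) ∘ (√·) ∘ hA.1.eigenvalues) : Matrix n n 𝕜) *
      diagonal ((↑) ∘ (√·) ∘ hA.1.eigenvalues) = diagonal (RCLike.ofReal ∘ hA.1.eigenvalues) := by
    rw [diagonal_mul_diagonal]
    congr 1 with i
    simp [← RCLike.ofReal_mul, Real.mul_self_sqrt (hA.eigenvalues_nonneg i)]
  conv_rhs => rw [hA.1.spectral_theorem, Unitary.conjStarAlgAut_apply, ← hDD]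
  simp only [sqrt, Matrix.mul_assoc]
  rw [← Matrix.mul_assoc (star U) U, hUU, Matrix.one_mul]

lemma norm_toEuclideanSpace_sqrt_sq (hA : A.PosSemidef) :
    ‖hA.sqrt.toEuclideanSpace‖ ^ 2 = RCLike.re A.trace := by
  rw [norm_toEuclideanSpace_sq, hA.conjTranspose_sqrt, hA.sqrt_mul_self]

lemma norm_trace_mul_unitary_le {S U : Matrix n n 𝕜}
    (hS : S.PosSemidef) (hU : U ∈ unitaryGroup n 𝕜) : ‖(S * U).trace‖ ≤ RCLike.re S.trace := by
  set R := hS.sqrt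
  calc ‖(S * U).trace‖ = ‖⟪R.toEuclideanSpace, (R * U).toEuclideanSpace⟫_𝕜‖ := by
        rw [inner_toEuclideanSpace, hS.conjTranspose_sqrt, ← Matrix.mul_assoc, hS.sqrt_mul_self]
    _ ≤ ‖R.toEuclideanSpace‖ * ‖(R * U).toEuclideanSpace‖ := norm_inner_le_norm _ _
    _ = RCLike.re S.trace := by
        rw [norm_toEuclideanSpace_mul_unitary _ hU, ← sq, hS.norm_toEuclideanSpace_sqrt_sq]

lemma norm_toEuclideanSpace_sqrt_of_trace_eq_one (hA : A.PosSemidef) (hA1 : A.trace = 1) :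
    ‖hA.sqrt.toEuclideanSpace‖ = 1 := by
  have h := hA.norm_toEuclideanSpace_sqrt_sq
  rwa [hA1, RCLike.one_re, pow_eq_one_iff_of_nonneg (norm_nonneg _) two_ne_zero] at h

end PosSemidef

lemma exists_unitary_eq_mul_diagonal (N : Matrix n n 𝕜) (d : n → ℝ)
    (h : Nᴴ * N = diagonal fun i => ((d i ^ 2 : ℝ) : 𝕜)) :
    ∃ B ∈ unitaryGroup n 𝕜, N = B * diagonal fun i => (d i : 𝕜) := by
  -- The columns `c i` of `N` are orthogonal with `‖c i‖ = |d i|`; the columns of `B` extend the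
  -- normalized nonzero ones to an orthonormal basis.
  set c : n → EuclideanSpace 𝕜 n := fun i => WithLp.toLp 2 fun k => N k i
  have hc : ∀ i j, ⟪c i, c j⟫_𝕜 = (Nᴴ * N) i j := by
    simp [c, PiLp.inner_apply, mul_apply, mul_comm]
  set s : Set n := {i | d i ≠ 0}
  have horth : Orthonormal 𝕜 (s.domRestrict fun i => ((d i : 𝕜))⁻¹ • c i) := by
    rw [orthonormal_iff_ite]
    rintro ⟨i, hi⟩ ⟨j, hj⟩
    simp only [Set.domRestrict_apply, inner_smul_left, inner_smul_right, hc, h, diagonal_apply,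
      Subtype.mk.injEq]
    split_ifs with hij
    · subst hij
      have : (d i : 𝕜) ≠ 0 := RCLike.ofReal_ne_zero.mpr hi
      simp only [map_inv₀, RCLike.conj_ofReal, RCLike.ofReal_pow]
      field_simp
    · simp
  obtain ⟨b, hb⟩ := horth.exists_orthonormalBasis_extension_of_card_eq (by simp)
  refine ⟨(EuclideanSpace.basisFun n 𝕜).toBasis.toMatrix b.toBasis,
    OrthonormalBasis.toMatrix_orthonormalBasis_mem_unitary _ _, ?_⟩
  ext k i
  have hci : c i = (d i : 𝕜) • b i := by
    by_cases hi : d i = 0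
    · rw [hi, RCLike.ofReal_zero, zero_smul, ← inner_self_eq_zero (𝕜 := 𝕜), hc, h,
        diagonal_apply_eq, hi]
      simp
    · rw [hb i hi, smul_inv_smul₀ (RCLike.ofReal_ne_zero.mpr hi)]
  simpa [c, mul_diagonal, mul_comm, Module.Basis.toMatrix_apply, RCLike.real_smul_eq_coe_mul]
    using congr($hci k)

lemma exists_unitary_eq_mul_sqrt (M : Matrix n n 𝕜) :
    ∃ V ∈ unitaryGroup n 𝕜, M = V * (posSemidef_conjTranspose_mul_self M).sqrt := by
  set hH := posSemidef_conjTranspose_mul_self M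
  set W : Matrix n n 𝕜 := hH.1.eigenvectorUnitary.1
  have hW : W ∈ unitaryGroup n 𝕜 := hH.1.eigenvectorUnitary.2
  have hWW : star W * W = 1 := mem_unitaryGroup_iff'.mp hW
  have hWW' : W * star W = 1 := mem_unitaryGroup_iff.mp hW
  set d : n → ℝ := fun i => √(hH.1.eigenvalues i)
  have hMW : (M * W)ᴴ * (M * W) = diagonal fun i => ((d i ^ 2 : ℝ) : 𝕜) := by
    calc (M * W)ᴴ * (M * W) = star W * (Mᴴ * M) * star (star W) := by
          simp only [conjTranspose_mul, star_eq_conjTranspose, conjTranspose_conjTranspose,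
            Matrix.mul_assoc]
      _ = diagonal (RCLike.ofReal ∘ hH.1.eigenvalues) :=
          hH.1.conjStarAlgAut_star_eigenvectorUnitary
      _ = diagonal fun i => ((d i ^ 2 : ℝ) : 𝕜) := by
          congr 1 with i
          simp [d, Real.sq_sqrt (hH.eigenvalues_nonneg i)]
  obtain ⟨B, hB, hMWB⟩ := exists_unitary_eq_mul_diagonal (M * W) d hMW
  refine ⟨B * star W, mul_mem hB (Unitary.star_mem hW), ?_⟩
  calc M = M * W * star W := by rw [Matrix.mul_assoc, hWW', Matrix.mul_one]
    _ = B * star W * hH.sqrt := by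
      rw [hMWB]
      simp only [PosSemidef.sqrt, Matrix.mul_assoc]
      rw [← Matrix.mul_assoc (star W) W, hWW, Matrix.one_mul]
      rfl

end Matrix

lemma traceNorm_nonneg (M : Matrix n n ℂ) : 0 ≤ traceNorm M :=
  (Complex.nonneg_iff.mp (posSemidef_conjTranspose_mul_self M).posSemidef_sqrt.trace_nonneg).1

lemma norm_trace_mul_unitary_le_traceNorm (M : Matrix n n ℂ) {U : Matrix n n ℂ}
    (hU : U ∈ unitaryGroup n ℂ) : ‖(M * U).trace‖ ≤ traceNorm M := by
  obtain ⟨V, hV, hMV⟩ := exists_unitary_eq_mul_sqrt M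
  calc ‖(M * U).trace‖ = ‖((posSemidef_conjTranspose_mul_self M).sqrt * (U * V)).trace‖ := by
        conv_lhs => rw [hMV]
        rw [Matrix.mul_assoc, trace_mul_comm, Matrix.mul_assoc]
    _ ≤ traceNorm M := (posSemidef_conjTranspose_mul_self M).posSemidef_sqrt
        |>.norm_trace_mul_unitary_le (mul_mem hU hV)

lemma exists_unitary_trace_mul_eq_traceNorm (M : Matrix n n ℂ) :
    ∃ U ∈ unitaryGroup n ℂ, (M * U).trace = traceNorm M := by
  obtain ⟨V, hV, hMV⟩ := exists_unitary_eq_mul_sqrt M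
  have hS := (posSemidef_conjTranspose_mul_self M).posSemidef_sqrt
  refine ⟨star V, Unitary.star_mem hV, ?_⟩
  conv_lhs => rw [hMV]
  rw [Matrix.mul_assoc, trace_mul_comm, Matrix.mul_assoc, mem_unitaryGroup_iff'.mp hV,
    Matrix.mul_one]
  exact Complex.eq_re_of_ofReal_le (r := 0) (by rw [Complex.ofReal_zero]; exact hS.trace_nonneg)

lemma exists_purifications {ρ σ τ : Matrix n n ℂ} (hρ : ρ.PosSemidef) (hσ : σ.PosSemidef)
    (hτ : τ.PosSemidef) (hρ1 : ρ.trace = 1) (hσ1 : σ.trace = 1) (hτ1 : τ.trace = 1) :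
    ∃ u v w : EuclideanSpace ℂ (n × n), ‖u‖ = 1 ∧ ‖v‖ = 1 ∧ ‖w‖ = 1 ∧
      ‖⟪u, v⟫_ℂ‖ = traceNorm (hρ.sqrt * hσ.sqrt) ∧ ‖⟪v, w⟫_ℂ‖ = traceNorm (hσ.sqrt * hτ.sqrt) ∧
      ‖⟪u, w⟫_ℂ‖ ≤ traceNorm (hρ.sqrt * hτ.sqrt) := by
  set R := hρ.sqrt
  set S := hσ.sqrt
  set T := hτ.sqrt
  obtain ⟨U₁, hU₁, hRS⟩ := exists_unitary_trace_mul_eq_traceNorm (R * S)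
  obtain ⟨U₂, hU₂, hST⟩ := exists_unitary_trace_mul_eq_traceNorm (S * T)
  refine ⟨(R * star U₁).toEuclideanSpace, S.toEuclideanSpace, (T * U₂).toEuclideanSpace,
    (norm_toEuclideanSpace_mul_unitary R (Unitary.star_mem hU₁)).trans
      (hρ.norm_toEuclideanSpace_sqrt_of_trace_eq_one hρ1),
    hσ.norm_toEuclideanSpace_sqrt_of_trace_eq_one hσ1,
    (norm_toEuclideanSpace_mul_unitary T hU₂).trans
      (hτ.norm_toEuclideanSpace_sqrt_of_trace_eq_one hτ1), ?_, ?_, ?_⟩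
  · rw [inner_toEuclideanSpace, conjTranspose_mul, hρ.conjTranspose_sqrt, ← star_eq_conjTranspose,
      star_star, Matrix.mul_assoc, trace_mul_comm, hRS, Complex.norm_real,
      Real.norm_of_nonneg (traceNorm_nonneg _)]
  · rw [inner_toEuclideanSpace, hσ.conjTranspose_sqrt, ← Matrix.mul_assoc, hST, Complex.norm_real,
      Real.norm_of_nonneg (traceNorm_nonneg _)]
  · rw [inner_toEuclideanSpace, conjTranspose_mul, hρ.conjTranspose_sqrt, ← star_eq_conjTranspose,
      star_star, Matrix.mul_assoc, trace_mul_comm]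
    simpa only [Matrix.mul_assoc] using
      norm_trace_mul_unitary_le_traceNorm (R * T) (mul_mem hU₂ hU₁)

/-- the improved triangle inequality for the purified distance
P(ρ,σ) := √(1 - F(ρ,σ)): if P(ρ,σ)² + P(σ,τ)² ≤ 1 then
P(ρ,τ) ≤ P(ρ,σ)·√F(σ,τ) + P(σ,τ)·√F(ρ,σ). -/
theorem purified_distance_improved_triangle
    (ρ σ τ : Matrix n n ℂ)
    (hρ : ρ.PosSemidef) (hσ : σ.PosSemidef) (hτ : τ.PosSemidef)
    (hρ1 : ρ.trace = 1) (hσ1 : σ.trace = 1) (hτ1 : τ.trace = 1)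
    (h : (1 - fid ρ σ hρ hσ) + (1 - fid σ τ hσ hτ) ≤ 1) :
    Real.sqrt (1 - fid ρ τ hρ hτ) ≤
      Real.sqrt (1 - fid ρ σ hρ hσ) * Real.sqrt (fid σ τ hσ hτ) +
        Real.sqrt (1 - fid σ τ hσ hτ) * Real.sqrt (fid ρ σ hρ hσ) := by
  obtain ⟨u, v, w, hu, hv, hw, huv, hvw, huw⟩ := exists_purifications hρ hσ hτ hρ1 hσ1 hτ1
  have huv1 : ‖⟪u, v⟫_ℂ‖ ≤ 1 := (norm_inner_le_norm u v).trans_eq (by simp [hu, hv])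
  have hvw1 : ‖⟪v, w⟫_ℂ‖ ≤ 1 := (norm_inner_le_norm v w).trans_eq (by simp [hv, hw])
  have hangle := norm_inner_mul_norm_inner_sub_le (𝕜 := ℂ) hu hv hw
  simp only [fid] at h ⊢
  simp only [huv, hvw] at hangle huv1 hvw1
  rw [Real.sqrt_sq (traceNorm_nonneg _), Real.sqrt_sq (traceNorm_nonneg _)]
  exact sqrt_one_sub_sq_le_of_mul_sub_le (traceNorm_nonneg _) huv1 (traceNorm_nonneg _) hvw1
    (by linarith) (hangle.trans huw)
end

section
/- Let r ≥ 0, and for ε ∈ [0,1) and κ ∈ [0,1] let η_min^ε be the minimum η ∈ [0,1] with (√(ηκ) + √((1-η)(1-κ)))² ≥ 1-ε. Then inf over α ∈ [0, 2^{-r}] and η ∈ [η_min^ε, 1] of log(max{η/α, (1-η)/(1-α)}) equals max{ r - log(1/η_min^ε), 0 }. -/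
/-! Write `a = ηmin` and `β = 2 ^ (-r)`. The two smoothing constraints `η ≤ s α` and
`1 - η ≤ s (1 - α)` add up to `1 ≤ s`, and with `a ≤ η` and `α ≤ β` they give `a / β ≤ s`.
The larger of these bounds is attained: by `α = η = a`, `s = 1` when `a ≤ β`, and by `α = β`,
`η = a`, `s = a / β` otherwise. So the least feasible `s` is `max (a / β) 1`, and the infimum
of `log s` is `max (log (a / β)) 0`. -/

open Real

lemma isLeast_feasible_ratio {a β : ℝ} (ha₀ : 0 ≤ a) (ha₁ : a ≤ 1) (hβ : 0 < β) :
    IsLeast {s : ℝ | ∃ α η : ℝ, 0 ≤ α ∧ α ≤ β ∧ a ≤ η ∧ η ≤ 1 ∧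
      0 ≤ s ∧ η ≤ s * α ∧ 1 - η ≤ s * (1 - α)} (max (a / β) 1) := by
  refine ⟨?_, ?_⟩
  · rcases le_total a β with haβ | hβa
    · rw [max_eq_right ((div_le_one hβ).2 haβ)]
      exact ⟨a, a, ha₀, haβ, le_rfl, ha₁, zero_le_one, by linarith, by linarith⟩
    · have hratio : 1 ≤ a / β := (one_le_div hβ).2 hβa
      rw [max_eq_left hratio]
      refine ⟨β, a, hβ.le, le_rfl, le_rfl, ha₁, by positivity, ?_, ?_⟩
      · rw [div_mul_cancel₀ a hβ.ne']
      · rw [mul_one_sub, div_mul_cancel₀ a hβ.ne']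
        linarith
  · rintro s ⟨α, η, -, hαβ, haη, -, hs, h₁, h₂⟩
    refine max_le ?_ (by linarith)
    rw [div_le_iff₀ hβ]
    calc a ≤ η := haη
      _ ≤ s * α := h₁
      _ ≤ s * β := mul_le_mul_of_nonneg_left hαβ hs

lemma isLeast_logb_feasible_ratio {b a β : ℝ} (hb : 1 < b) (ha₀ : 0 ≤ a) (ha₁ : a ≤ 1)
    (hβ : 0 < β) :
    IsLeast {y : ℝ | ∃ α η s : ℝ, 0 ≤ α ∧ α ≤ β ∧ a ≤ η ∧ η ≤ 1 ∧
      0 ≤ s ∧ η ≤ s * α ∧ 1 - η ≤ s * (1 - α) ∧ y = logb b s} (logb b (max (a / β) 1)) := by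
  obtain ⟨⟨α, η, h₁, h₂, h₃, h₄, h₅, h₆, h₇⟩, hlower⟩ := isLeast_feasible_ratio ha₀ ha₁ hβ
  refine ⟨⟨α, η, _, h₁, h₂, h₃, h₄, h₅, h₆, h₇, rfl⟩, ?_⟩
  rintro y ⟨α, η, s, h₁, h₂, h₃, h₄, h₅, h₆, h₇, rfl⟩
  exact logb_le_logb_of_le hb (by positivity) (hlower ⟨α, η, h₁, h₂, h₃, h₄, h₅, h₆, h₇⟩)

lemma logb_max_one {b x : ℝ} (hb : 1 < b) (hx : 0 < x) :
    logb b (max x 1) = max (logb b x) 0 := by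
  rcases le_total x 1 with h | h
  · rw [max_eq_right h, logb_one, max_eq_right (logb_nonpos hb hx.le h)]
  · rw [max_eq_left h, max_eq_left (logb_nonneg hb h)]

theorem smoothed_dmax_value_general (r ε κ ηmin : ℝ)
    (hmin : IsLeast {η : ℝ | 0 ≤ η ∧ η ≤ 1 ∧
      1 - ε ≤ (Real.sqrt (η * κ) + Real.sqrt ((1 - η) * (1 - κ))) ^ 2} ηmin) :
    sInf {y : ℝ | ∃ α η s : ℝ, 0 ≤ α ∧ α ≤ (2 : ℝ) ^ (-r) ∧ ηmin ≤ η ∧ η ≤ 1 ∧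
        0 ≤ s ∧ η ≤ s * α ∧ 1 - η ≤ s * (1 - α) ∧ y = Real.logb 2 s} =
      if ηmin = 0 then 0 else max (r - Real.logb 2 (1 / ηmin)) 0 := by
  obtain ⟨⟨hη₀, hη₁, -⟩, -⟩ := hmin
  have hβ : (0 : ℝ) < 2 ^ (-r) := by positivity
  rw [(isLeast_logb_feasible_ratio one_lt_two hη₀ hη₁ hβ).csInf_eq]
  split_ifs with hzero
  · simp [hzero]
  · have hpos : 0 < ηmin := lt_of_le_of_ne hη₀ (Ne.symm hzero)
    rw [logb_max_one one_lt_two (div_pos hpos hβ), logb_div hpos.ne' hβ.ne',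
      logb_rpow two_pos (by norm_num), one_div, logb_inv]
    ring_nf

/-- let r ≥ 0, ε ∈ [0,1), κ ∈ [0,1], and let ηmin be the least η ∈ [0,1]
with classical fidelity (√(ηκ) + √((1-η)(1-κ)))² ≥ 1-ε.  Then the infimum over
α ∈ [0, 2^{-r}] and η ∈ [ηmin, 1] of log₂(max{η/α, (1-η)/(1-α)}) — encoded, with the
convention 1/0 = +∞, as the infimum of log₂ s over all s with η ≤ sα and 1-η ≤ s(1-α) —
equals max{ r - log₂(1/ηmin), 0 } (which is 0 when ηmin = 0, by the convention
log(1/0) = +∞). -/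
theorem smoothed_dmax_value (r ε κ ηmin : ℝ) (hr : 0 ≤ r)
    (hε : ε ∈ Set.Ico (0 : ℝ) 1) (hκ : κ ∈ Set.Icc (0 : ℝ) 1)
    (hmin : IsLeast {η : ℝ | 0 ≤ η ∧ η ≤ 1 ∧
      1 - ε ≤ (Real.sqrt (η * κ) + Real.sqrt ((1 - η) * (1 - κ))) ^ 2} ηmin) :
    sInf {y : ℝ | ∃ α η s : ℝ, 0 ≤ α ∧ α ≤ (2 : ℝ) ^ (-r) ∧ ηmin ≤ η ∧ η ≤ 1 ∧
        0 ≤ s ∧ η ≤ s * α ∧ 1 - η ≤ s * (1 - α) ∧ y = Real.logb 2 s} =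
      if ηmin = 0 then 0 else max (r - Real.logb 2 (1 / ηmin)) 0 :=
  smoothed_dmax_value_general r ε κ ηmin hmin
end

section
/- Let |Hog⟩ be a unit vector in ℂ^8 such that |⟨Hog| P |Hog⟩| = 1/3 for every 3-qubit Pauli operator P ≠ 𝟙 (all 63 nontrivial Paulis). Let σ be any density matrix on ℂ^8 satisfying (1/8) Σ_{P ∈ 𝒫} |Tr(σP)| ≤ 1, where 𝒫 is the set of all 64 three-qubit Pauli operators. Then ⟨Hog| σ |Hog⟩ ≤ 5/12. -/
/-!
Expanding `σ` in the Pauli basis gives `8 ⟨v|σ|v⟩ = ∑_P Tr(σP) ⟨v|P|v⟩`. The identity contributes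
`Tr σ · ⟨v|v⟩ = 1`, each of the 63 other terms is at most `|Tr(σP)| / 3` in modulus, and the
stab-norm bound leaves at most `8 - 1 = 7` for `∑_{P ≠ 𝟙} |Tr(σP)|`. Hence
`8 ⟨v|σ|v⟩ ≤ 1 + 7/3`, i.e. `⟨v|σ|v⟩ ≤ 5/12`.
-/

open Matrix Kronecker ComplexOrder

/-- The four single-qubit Pauli matrices 𝟙, X, Y, Z. -/
noncomputable def pauli1 : Fin 4 → Matrix (Fin 2) (Fin 2) ℂ :=
  ![!![1, 0; 0, 1], !![0, 1; 1, 0], !![0, -Complex.I; Complex.I, 0], !![1, 0; 0, -1]]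

/-- The 64 three-qubit Pauli operators. -/
noncomputable def pauli3 (a : Fin 4 × Fin 4 × Fin 4) :
    Matrix (Fin 2 × Fin 2 × Fin 2) (Fin 2 × Fin 2 × Fin 2) ℂ :=
  pauli1 a.1 ⊗ₖ (pauli1 a.2.1 ⊗ₖ pauli1 a.2.2)

/-- Coordinate form of `∑ₐ Tr(σ Pₐ) Pₐ = c • σ` for every matrix `σ` (see `sum_trace_smul`). -/
def HasCompletenessRelation {n ι α : Type*} [Fintype ι] [DecidableEq n] [CommRing α]
    (c : α) (P : ι → Matrix n n α) : Prop :=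
  ∀ i j k l, ∑ a, P a j i * P a k l = if i = k ∧ j = l then c else 0

namespace HasCompletenessRelation

variable {n m ι κ α : Type*} [Fintype ι] [Fintype κ] [DecidableEq n] [DecidableEq m] [CommRing α]
  {c d : α}

theorem kronecker {P : ι → Matrix n n α} {Q : κ → Matrix m m α}
    (hP : HasCompletenessRelation c P) (hQ : HasCompletenessRelation d Q) :
    HasCompletenessRelation (c * d) (fun ab : ι × κ => P ab.1 ⊗ₖ Q ab.2) := by
  intro i j k l
  calc ∑ ab : ι × κ, (P ab.1 ⊗ₖ Q ab.2) j i * (P ab.1 ⊗ₖ Q ab.2) k l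
      = (∑ a, P a j.1 i.1 * P a k.1 l.1) * ∑ b, Q b j.2 i.2 * Q b k.2 l.2 := by
        simp only [kroneckerMap_apply, Fintype.sum_prod_type, Finset.sum_mul_sum]
        exact Finset.sum_congr rfl fun _ _ => Finset.sum_congr rfl fun _ _ => by ring
    _ = if i = k ∧ j = l then c * d else 0 := by
        rw [hP, hQ]
        simp only [Prod.ext_iff]
        split_ifs <;> simp_all

variable [Fintype n]

theorem sum_trace_smul {P : ι → Matrix n n α} (hP : HasCompletenessRelation c P)
    (σ : Matrix n n α) : ∑ a, (σ * P a).trace • P a = c • σ := by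
  ext k l
  calc (∑ a, (σ * P a).trace • P a) k l
      = ∑ i, ∑ j, σ i j * ∑ a, P a j i * P a k l := by
        simp only [Matrix.sum_apply, Matrix.smul_apply, smul_eq_mul, trace, diag, mul_apply,
          Finset.sum_mul, Finset.mul_sum]
        rw [Finset.sum_comm]
        refine Finset.sum_congr rfl fun i _ => ?_
        rw [Finset.sum_comm]
        exact Finset.sum_congr rfl fun j _ => Finset.sum_congr rfl fun a _ => by ring
    _ = ∑ i, ∑ j, σ i j * if i = k ∧ j = l then c else 0 := by
        simp only [hP _ _ k l]
    _ = (c • σ) k l := by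
        simp [ite_and, mul_comm]

theorem dotProduct_mulVec {P : ι → Matrix n n α} (hP : HasCompletenessRelation c P)
    (σ : Matrix n n α) (u v : n → α) :
    c * (u ⬝ᵥ σ *ᵥ v) = ∑ a, (σ * P a).trace * (u ⬝ᵥ P a *ᵥ v) := by
  rw [← smul_eq_mul, ← dotProduct_smul, ← smul_mulVec, ← hP.sum_trace_smul, sum_mulVec,
    dotProduct_sum]
  simp only [smul_mulVec, dotProduct_smul, smul_eq_mul]

end HasCompletenessRelation

theorem pauli1_hasCompletenessRelation : HasCompletenessRelation 2 pauli1 := by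
  intro i j k l
  fin_cases i <;> fin_cases j <;> fin_cases k <;> fin_cases l <;>
    simp [pauli1, Fin.sum_univ_four] <;> norm_num

theorem pauli3_hasCompletenessRelation : HasCompletenessRelation 8 pauli3 := by
  have h := pauli1_hasCompletenessRelation.kronecker
    (pauli1_hasCompletenessRelation.kronecker pauli1_hasCompletenessRelation)
  rwa [show (2 : ℂ) * (2 * 2) = 8 by norm_num] at h

theorem pauli3_zero : pauli3 (0, 0, 0) = 1 := by
  have h : pauli1 0 = 1 := by
    ext i j
    fin_cases i <;> fin_cases j <;> simp [pauli1]
  simp [pauli3, h]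

theorem hoggar_overlap_bound_general
    (v : Fin 2 × Fin 2 × Fin 2 → ℂ)
    (hv : dotProduct (star v) v = 1)
    (hHog : ∀ a : Fin 4 × Fin 4 × Fin 4, a ≠ (0, 0, 0) →
      ‖dotProduct (star v) ((pauli3 a).mulVec v)‖ = 1 / 3)
    (σ : Matrix (Fin 2 × Fin 2 × Fin 2) (Fin 2 × Fin 2 × Fin 2) ℂ)
    (hσ1 : σ.trace = 1)
    (hst : (1 / 8 : ℝ) * ∑ a : Fin 4 × Fin 4 × Fin 4,
      ‖(σ * pauli3 a).trace‖ ≤ 1) :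
    (dotProduct (star v) (σ.mulVec v)).re ≤ 5 / 12 := by
  set t := fun a => (σ * pauli3 a).trace
  set w := fun a => star v ⬝ᵥ pauli3 a *ᵥ v
  have hexpand : 8 * (star v ⬝ᵥ σ *ᵥ v) = ∑ a, t a * w a :=
    pauli3_hasCompletenessRelation.dotProduct_mulVec σ (star v) v
  have ht₀ : ‖t (0, 0, 0)‖ = 1 := by simp [t, pauli3_zero, hσ1]
  have hw₀ : ‖w (0, 0, 0)‖ = 1 := by simp [w, pauli3_zero, hv]
  have hw : ∀ a ≠ (0, 0, 0), ‖w a‖ = 1 / 3 := hHog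
  have hsplit : ∑ a, ‖t a‖ * ‖w a‖ = 1 + 1 / 3 * (∑ a, ‖t a‖ - 1) := by
    rw [← Finset.add_sum_erase _ _ (Finset.mem_univ (0, 0, 0)), ht₀, hw₀,
      ← Finset.add_sum_erase _ _ (Finset.mem_univ (0, 0, 0)), ht₀,
      Finset.sum_congr rfl fun a ha => by rw [hw a (Finset.ne_of_mem_erase ha)], ← Finset.sum_mul]
    ring
  calc (star v ⬝ᵥ σ *ᵥ v).re ≤ ‖star v ⬝ᵥ σ *ᵥ v‖ := Complex.re_le_norm _
    _ = ‖∑ a, t a * w a‖ / 8 := by rw [← hexpand, norm_mul]; norm_num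
    _ ≤ (∑ a, ‖t a‖ * ‖w a‖) / 8 := by gcongr; exact (norm_sum_le _ _).trans_eq (by simp)
    _ ≤ 5 / 12 := by rw [hsplit]; linarith

/-- let |Hog⟩ ∈ ℂ^8 be a unit vector with |⟨Hog|P|Hog⟩| = 1/3 for every
nontrivial 3-qubit Pauli P, and let σ be a density matrix with stab-norm
(1/8)·Σ_P |Tr(σP)| ≤ 1.  Then ⟨Hog|σ|Hog⟩ ≤ 5/12. -/
theorem hoggar_overlap_bound
    (v : Fin 2 × Fin 2 × Fin 2 → ℂ)
    (hv : dotProduct (star v) v = 1)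
    (hHog : ∀ a : Fin 4 × Fin 4 × Fin 4, a ≠ (0, 0, 0) →
      ‖dotProduct (star v) ((pauli3 a).mulVec v)‖ = 1 / 3)
    (σ : Matrix (Fin 2 × Fin 2 × Fin 2) (Fin 2 × Fin 2 × Fin 2) ℂ)
    (hσ : σ.PosSemidef) (hσ1 : σ.trace = 1)
    (hst : (1 / 8 : ℝ) * ∑ a : Fin 4 × Fin 4 × Fin 4,
      ‖(σ * pauli3 a).trace‖ ≤ 1) :
    (dotProduct (star v) (σ.mulVec v)).re ≤ 5 / 12 :=
  hoggar_overlap_bound_general v hv hHog σ hσ1 hst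
end
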